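/- Let p > 3 be a prime with p ≡ 1 (mod 4), set n = (p-1)/2, and let d ∈ F_p^×. Then there exists x ∈ F_p^× (i.e., x ≠ 0) such that D(d,p) = d^{(p-1)/4} · x^2. -/

import Mathlib

/-!
Since every `α i` is a nonzero square, `α i ^ n = 1`. Expanding `(α i + d α j) ^ (n + 1)` by the
binomial theorem and reducing exponents modulo `n` writes the matrix as `V S Vᵀ`, where `V` is the
Vandermonde matrix of the `α i` and `S` is supported on the permutation `r ↦ 1 - r` of `ℤ/n`. So
`D(d,p) = ± (det V)² ∏ c_r`. Pairing `r` with `n + 1 - r` turns the coefficients `c_r`, `2 ≤ r < n`,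
into a square times `d ^ ((n + 1)(n - 2)/2)`, while `c₀ c₁ = d · dⁿ · (dⁿ + 1/2)²` because
`dⁿ = ±1`. As `-1` is a square for `p ≡ 1 (mod 4)`, so is the sign, and collecting the powers of
`d` leaves `d ^ (n/2)` times a nonzero square.
-/

open Finset

theorem Matrix.det_of_sum_mul_mul_perm {ι R : Type*} [Fintype ι] [DecidableEq ι] [CommRing R]
    (E : Matrix ι ι R) (c : ι → R) (σ : Equiv.Perm ι) :
    (Matrix.of fun i j => ∑ r, E i r * c r * E j (σ r)).det
      = σ.sign * (∏ r, c r) * E.det ^ 2 := by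
  have hfactor : (Matrix.of fun i j => ∑ r, E i r * c r * E j (σ r))
      = E * Matrix.diagonal c * (E.submatrix id σ).transpose := by
    ext i j
    rw [Matrix.mul_apply]
    simp only [Matrix.of_apply, Matrix.mul_diagonal, Matrix.transpose_apply,
      Matrix.submatrix_apply, id]
  rw [hfactor, Matrix.det_mul, Matrix.det_mul, Matrix.det_diagonal, Matrix.det_transpose,
    Matrix.det_permute']
  ring

theorem Finset.prod_range_two_mul {M : Type*} [CommMonoid M] (f : ℕ → M) (k : ℕ) :
    ∏ i ∈ range (2 * k), f i = ∏ i ∈ range k, f i * f (2 * k - 1 - i) := by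
  rw [two_mul, prod_range_add, ← prod_range_reflect (fun i => f (k + i)), ← prod_mul_distrib]
  refine prod_congr rfl fun i hi => ?_
  rw [mem_range] at hi
  congr 2
  omega

theorem pow_val_one_sub_fin {M : Type*} [Monoid M] {n : ℕ} [NeZero n] (hn : 2 ≤ n) {x : M}
    (hx : x ^ n = 1) (r : Fin n) : x ^ ((1 - r : Fin n) : ℕ) = x ^ (n + 1 - r) := by
  rw [Fin.val_sub, Fin.val_one', Nat.mod_eq_of_lt (by omega : 1 < n), ← pow_eq_pow_mod _ hx]
  congr 1
  omega

section CyclicBinomial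

variable {R : Type*} [CommRing R]

/-- The coefficient of `x ^ r * y ^ (n + 1 - r)` in `(x + d * y) ^ (n + 1)` when `x ^ n = y ^ n = 1`:
the binomial terms of index `r` and `n + r` merge. -/
def cyclicBinomCoeff (n : ℕ) (d : R) (r : ℕ) : R :=
  (n + 1).choose r * d ^ (n + 1 - r) + (n + 1).choose (n + r) * d ^ (1 - r)

theorem cyclicBinomCoeff_zero (n : ℕ) (d : R) :
    cyclicBinomCoeff n d 0 = d ^ (n + 1) + (n + 1) * d := by
  simp only [cyclicBinomCoeff, Nat.choose_zero_right, Nat.cast_one, tsub_zero, one_mul, add_zero,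
    Nat.choose_succ_self_right, Nat.cast_add, pow_one]

theorem cyclicBinomCoeff_one (n : ℕ) (d : R) :
    cyclicBinomCoeff n d 1 = (n + 1) * d ^ n + 1 := by
  simp only [cyclicBinomCoeff, Nat.choose_one_right, Nat.cast_add, Nat.cast_one,
    add_tsub_cancel_right, Nat.choose_self, tsub_self, pow_zero, mul_one]

theorem cyclicBinomCoeff_of_two_le {r : ℕ} (hr : 2 ≤ r) (n : ℕ) (d : R) :
    cyclicBinomCoeff n d r = (n + 1).choose r * d ^ (n + 1 - r) := by
  rw [cyclicBinomCoeff, Nat.choose_eq_zero_of_lt (show n + 1 < n + r by omega), Nat.cast_zero,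
    zero_mul, add_zero]

theorem cyclicBinomCoeff_zero_mul_one {n : ℕ} {d : R} (hd : (d ^ n) ^ 2 = 1) :
    cyclicBinomCoeff n d 0 * cyclicBinomCoeff n d 1 = d * d ^ n * (d ^ n + (n + 1)) ^ 2 := by
  rw [cyclicBinomCoeff_zero, cyclicBinomCoeff_one]
  linear_combination (-d * (d ^ n + (n + 1))) * hd

theorem add_mul_pow_succ_eq_sum_cyclicBinomCoeff {n : ℕ} (hn : 2 ≤ n) {x y : R}
    (hx : x ^ n = 1) (hy : y ^ n = 1) (d : R) :
    (x + d * y) ^ (n + 1) = ∑ r ∈ range n, x ^ r * cyclicBinomCoeff n d r * y ^ (n + 1 - r) := by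
  have hpad : ∑ k ∈ range (n + 1 + 1), x ^ k * (d * y) ^ (n + 1 - k) * ((n + 1).choose k : R)
      = ∑ k ∈ range (n + n), x ^ k * (d * y) ^ (n + 1 - k) * ((n + 1).choose k : R) := by
    refine sum_subset (range_subset_range.2 (by omega)) fun k _ hk => ?_
    rw [Nat.choose_eq_zero_of_lt (by simp only [mem_range] at hk; omega), Nat.cast_zero, mul_zero]
  rw [add_pow, hpad, sum_range_add, ← sum_add_distrib]
  refine sum_congr rfl fun r _ => ?_
  match r with
  | 0 =>
    simp only [cyclicBinomCoeff_zero, add_zero, Nat.sub_zero, Nat.add_sub_cancel_left,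
      Nat.choose_zero_right, Nat.choose_succ_self_right, mul_pow, pow_succ, hx, hy]
    push_cast
    ring
  | 1 =>
    simp only [cyclicBinomCoeff_one, Nat.add_sub_cancel, Nat.sub_self, Nat.choose_one_right,
      Nat.choose_self, mul_pow, pow_succ, pow_zero, hx, hy]
    push_cast
    ring
  | r + 2 =>
    rw [cyclicBinomCoeff_of_two_le (by omega),
      Nat.choose_eq_zero_of_lt (by omega : n + 1 < n + (r + 2)), Nat.cast_zero, mul_zero,
      add_zero, mul_pow]
    ring

theorem det_of_add_mul_pow_succ {n : ℕ} [NeZero n] (hn : 2 ≤ n) (α : Fin n → R)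
    (hα : ∀ i, α i ^ n = 1) (d : R) :
    (Matrix.of fun i j : Fin n => (α i + d * α j) ^ (n + 1)).det
      = Equiv.Perm.sign (Equiv.subLeft (1 : Fin n)) * (∏ r ∈ range n, cyclicBinomCoeff n d r)
        * (Matrix.vandermonde α).det ^ 2 := by
  rw [← Fin.prod_univ_eq_prod_range, ← Matrix.det_of_sum_mul_mul_perm]
  congr
  ext i j
  rw [add_mul_pow_succ_eq_sum_cyclicBinomCoeff hn (hα i) (hα j), ← Fin.sum_univ_eq_sum_range]
  refine sum_congr rfl fun r _ => ?_
  rw [Matrix.vandermonde_apply, Matrix.vandermonde_apply, Equiv.subLeft_apply,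
    pow_val_one_sub_fin hn (hα j)]

theorem prod_range_cyclicBinomCoeff {n k : ℕ} (hn : n = 2 * k + 2) (d : R) :
    ∏ r ∈ range n, cyclicBinomCoeff n d r
      = cyclicBinomCoeff n d 0 * cyclicBinomCoeff n d 1
        * ((∏ j ∈ range k, ((n + 1).choose (j + 2) : R)) ^ 2 * d ^ ((n + 1) * k)) := by
  have hpair : ∀ j ∈ range k,
      cyclicBinomCoeff n d (j + 2) * cyclicBinomCoeff n d (2 * k - 1 - j + 2)
        = ((n + 1).choose (j + 2) : R) ^ 2 * d ^ (n + 1) := by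
    intro j hj
    rw [mem_range] at hj
    rw [cyclicBinomCoeff_of_two_le (by omega), cyclicBinomCoeff_of_two_le (by omega),
      Nat.choose_symm_of_eq_add (show n + 1 = 2 * k - 1 - j + 2 + (j + 2) by omega),
      mul_mul_mul_comm, ← sq, ← pow_add]
    congr 2
    omega
  rw [hn, prod_range_succ', prod_range_succ',
    prod_range_two_mul (fun j => cyclicBinomCoeff _ d (j + 2)), ← hn, prod_congr rfl hpair,
    prod_mul_distrib, prod_pow, prod_const, card_range, ← pow_mul]
  ring

end CyclicBinomial

theorem ZMod.natCast_choose_ne_zero {p m j : ℕ} [Fact p.Prime] (hm : m < p) (hj : j ≤ m) :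
    ((m.choose j : ℕ) : ZMod p) ≠ 0 := by
  rw [Ne, ZMod.natCast_eq_zero_iff]
  intro hdvd
  have : p ∣ m.factorial := by
    rw [← Nat.choose_mul_factorial_mul_factorial hj, mul_assoc]
    exact hdvd.mul_right _
  exact absurd ((Nat.Prime.dvd_factorial Fact.out).1 this) (by omega)

theorem ZMod.isSquare_intCast_unit {p : ℕ} [Fact p.Prime] (hp : p % 4 ≠ 3) (u : ℤˣ) :
    IsSquare ((u : ℤ) : ZMod p) := by
  rcases Int.units_eq_one_or u with rfl | rfl
  · simp
  · simpa using ZMod.exists_sq_eq_neg_one_iff.2 hp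

theorem ZMod.add_half_ne_zero {p n : ℕ} [Fact p.Prime] (hp : p = 2 * n + 1) (hp3 : p ≠ 3)
    {ε : ZMod p} (hε : ε = 1 ∨ ε = -1) : ε + (n + 1) ≠ 0 := by
  have hhalf : (2 : ZMod p) * (n + 1) = 1 := by
    have : ((2 * n + 1 : ℕ) : ZMod p) = 0 := by rw [← hp, ZMod.natCast_self]
    push_cast at this
    linear_combination this
  intro h
  rcases hε with rfl | rfl
  · have h3 : ((3 : ℕ) : ZMod p) = 0 := by push_cast; linear_combination 2 * h - hhalf
    rw [ZMod.natCast_eq_zero_iff, Nat.prime_dvd_prime_iff_eq Fact.out Nat.prime_three] at h3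
    exact hp3 h3
  · exact one_ne_zero (by linear_combination hhalf - 2 * h : (1 : ZMod p) = 0)

/-- Let `p > 3` be a prime with `p ≡ 1 (mod 4)`, `n = (p-1)/2`, `α` an enumeration of the
nonzero squares of `F_p`, and `d ∈ F_p^×`. Then there exists a nonzero `x ∈ F_p` with
`D(d,p) = det [(α_i + d·α_j)^{(p+1)/2}] = d^{(p-1)/4} x²`. -/
theorem stmt_7 (p : ℕ) [Fact p.Prime] (hp3 : 3 < p) (hp4 : p % 4 = 1)
    (n : ℕ) (hn : n = (p - 1) / 2)
    (α : Fin n → ZMod p) (hαinj : Function.Injective α)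
    (hαrange : Set.range α = {x : ZMod p | x ≠ 0 ∧ IsSquare x})
    (d : ZMod p) (hd : d ≠ 0) :
    ∃ x : ZMod p, x ≠ 0 ∧
      Matrix.det (Matrix.of fun i j : Fin n => (α i + d * α j) ^ ((p + 1) / 2)) =
        d ^ ((p - 1) / 4) * x ^ 2 := by
  obtain ⟨k, rfl, rfl⟩ : ∃ k, p = 4 * k + 5 ∧ n = 2 * k + 2 := ⟨(p - 5) / 4, by omega, by omega⟩
  have : NeZero (2 * k + 2) := ⟨by omega⟩
  have hhalf : (4 * k + 5) / 2 = 2 * k + 2 := by omega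
  have hα : ∀ i, α i ^ (2 * k + 2) = 1 := fun i => by
    have hi : α i ∈ Set.range α := Set.mem_range_self i
    rw [hαrange] at hi
    exact hhalf ▸ (ZMod.euler_criterion _ hi.1).1 hi.2
  have hε : d ^ (2 * k + 2) = 1 ∨ d ^ (2 * k + 2) = -1 :=
    hhalf ▸ ZMod.pow_div_two_eq_neg_one_or_one _ hd
  set σ := Equiv.subLeft (1 : Fin (2 * k + 2))
  obtain ⟨s, hs⟩ := ZMod.isSquare_intCast_unit (p := 4 * k + 5) (by omega) (Equiv.Perm.sign σ)
  have hs0 : s ≠ 0 := by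
    rintro rfl
    exact ((Units.isUnit _).map (Int.castRingHom (ZMod _))).ne_zero (by simpa using hs)
  set b := ∏ j ∈ range k, (((2 * k + 2 + 1).choose (j + 2) : ℕ) : ZMod (4 * k + 5))
  have hb : b ≠ 0 := prod_ne_zero_iff.2 fun j hj =>
    ZMod.natCast_choose_ne_zero (by omega) (by rw [mem_range] at hj; omega)
  refine ⟨s * d ^ ((k + 1) ^ 2) * (d ^ (2 * k + 2) + (((2 * k + 2 : ℕ) : ZMod _) + 1)) * b
    * (Matrix.vandermonde α).det, ?_, ?_⟩
  · exact mul_ne_zero (mul_ne_zero (mul_ne_zero (mul_ne_zero hs0 (pow_ne_zero _ hd))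
      (ZMod.add_half_ne_zero (by omega) (by omega) hε)) hb)
      (Matrix.det_vandermonde_ne_zero_iff.2 hαinj)
  · have hε2 : (d ^ (2 * k + 2)) ^ 2 = 1 := by rcases hε with h | h <;> simp [h]
    rw [show (4 * k + 5 + 1) / 2 = 2 * k + 2 + 1 by omega,
      show (4 * k + 5 - 1) / 4 = k + 1 by omega, det_of_add_mul_pow_succ (by omega) α hα,
      prod_range_cyclicBinomCoeff rfl, cyclicBinomCoeff_zero_mul_one hε2, hs]
    ring
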